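/- arXiv:0810.0844 — 4 statements merged into one kernel-verified Lean document; each statement's English description precedes it below -/
import Mathlib

section
/- Let A be an associative ring in which the symmetric product x • y = xy + yx additionally satisfies the Leibniz rule with respect to the commutator bracket [x,y] = xy - yx, i.e. [x • y, z] = x • [y,z] + [x,z] • y, and is associative: x • (y • z) = (x • y) • z. If 2 is invertible in A (or A is torsion-free as an additive group), then the double commutator vanishes: [[x,y],z] = 0 for all x, y, z. -/
theorem commutator_commutator_eq_symmProd_associator {R : Type*} [NonUnitalRing R] (x y z : R) :
    (x*y - y*x)*z - z*(x*y - y*x)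
      = (x*(z*y + y*z) + (z*y + y*z)*x) - ((x*z + z*x)*y + y*(x*z + z*x)) := by
  noncomm_ring

theorem double_commutator_vanishes_general {A : Type*} [Ring A]
    (assoc : ∀ x y z : A,
      x*(y*z + z*y) + (y*z + z*y)*x = (x*y + y*x)*z + z*(x*y + y*x))
    (x y z : A) :
    (x*y - y*x)*z - z*(x*y - y*x) = 0 := by
  rw [commutator_commutator_eq_symmProd_associator, assoc x z y, sub_self]

/-- In an associative ring whose symmetric product `x • y = xy + yx` satisfies the
Leibniz rule with respect to the commutator and is associative, and whose additive
group has no 2-torsion, the double commutator vanishes. -/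
theorem double_commutator_vanishes {A : Type*} [Ring A]
    (leibniz : ∀ x y z : A,
      (x*y + y*x)*z - z*(x*y + y*x)
        = (x*(y*z - z*y) + (y*z - z*y)*x) + ((x*z - z*x)*y + y*(x*z - z*x)))
    (assoc : ∀ x y z : A,
      x*(y*z + z*y) + (y*z + z*y)*x = (x*y + y*x)*z + z*(x*y + y*x))
    (no2torsion : ∀ a : A, a + a = 0 → a = 0)
    (x y z : A) :
    (x*y - y*x)*z - z*(x*y - y*x) = 0 :=
  double_commutator_vanishes_general assoc x y z
end

section
/- With e(q) the deformed Eulerian idempotent in the Hecke algebra H₃(q) and ω = g₁g₂g₁ the maximal element, one has ω · e(q) = e(q). -/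
/-!
Write `ω = g₁g₂g₁` and `s = q - q⁻¹`, so that `gᵢ² = 1 + s gᵢ`. Then
`2[3] e(q)` is a combination of `1 + ω`, `g₁ + g₂` and `g₁g₂ + g₂g₁`. Left multiplication by `ω`
swaps `1 ↔ ω` and `g₁ + g₂ ↔ g₁g₂ + g₂g₁` up to multiples of `s`, and for exactly these
coefficients the `s`-corrections cancel, over any commutative ring of scalars.
-/

open RatFunc

namespace Hecke

variable {R A : Type*} [CommRing R] [Ring A] [Algebra R A] {g1 g2 : A} {s : R}

theorem omega_mul_g1 (h1 : g1 * g1 = 1 + s • g1) :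
    g1 * g2 * g1 * g1 = g1 * g2 + s • (g1 * g2 * g1) := by
  rw [mul_assoc, h1, mul_add, mul_one, mul_smul_comm, mul_assoc]

theorem omega_mul_g2 (braid : g1 * g2 * g1 = g2 * g1 * g2) (h2 : g2 * g2 = 1 + s • g2) :
    g1 * g2 * g1 * g2 = g2 * g1 + s • (g1 * g2 * g1) := by
  rw [braid, mul_assoc, h2, mul_add, mul_one, mul_smul_comm, ← braid]

theorem omega_mul_g1_mul_g2 (braid : g1 * g2 * g1 = g2 * g1 * g2)
    (h1 : g1 * g1 = 1 + s • g1) (h2 : g2 * g2 = 1 + s • g2) :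
    g1 * g2 * g1 * (g1 * g2) =
      g1 + s • (g1 * g2) + s • (g2 * g1) + (s * s) • (g1 * g2 * g1) := by
  rw [← mul_assoc, omega_mul_g1 h1, add_mul, smul_mul_assoc, omega_mul_g2 braid h2, smul_add,
    smul_smul, mul_assoc g1 g2 g2, h2, mul_add, mul_one, mul_smul_comm]
  abel

theorem omega_mul_g2_mul_g1 (braid : g1 * g2 * g1 = g2 * g1 * g2)
    (h1 : g1 * g1 = 1 + s • g1) (h2 : g2 * g2 = 1 + s • g2) :
    g1 * g2 * g1 * (g2 * g1) =
      g2 + s • (g1 * g2) + s • (g2 * g1) + (s * s) • (g1 * g2 * g1) := by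
  rw [← mul_assoc, omega_mul_g2 braid h2, add_mul, smul_mul_assoc, omega_mul_g1 h1, smul_add,
    smul_smul, mul_assoc g2 g1 g1, h1, mul_add, mul_one, mul_smul_comm]
  abel

theorem omega_mul_omega (braid : g1 * g2 * g1 = g2 * g1 * g2)
    (h1 : g1 * g1 = 1 + s • g1) (h2 : g2 * g2 = 1 + s • g2) :
    g1 * g2 * g1 * (g1 * g2 * g1) =
      1 + s • g1 + s • g2 + (s * s) • (g1 * g2) + (s * s) • (g2 * g1)
        + (s + s * s * s) • (g1 * g2 * g1) := by
  rw [← mul_assoc, omega_mul_g1_mul_g2 braid h1 h2]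
  simp only [add_mul, smul_mul_assoc, omega_mul_g1 h1, h1, mul_assoc g2 g1 g1, mul_add, mul_one,
    mul_smul_comm, smul_add, smul_smul]
  module

/-- `2[3] e(q)`, with `s = q - q⁻¹`. -/
def eulerianNumerator (s : R) (g1 g2 : A) : A :=
  (2 : R) • (1 + g1 * g2 * g1) + (s - 1) • (g1 + g2) - (s + 1) • (g1 * g2 + g2 * g1)

theorem omega_mul_eulerianNumerator (braid : g1 * g2 * g1 = g2 * g1 * g2)
    (h1 : g1 * g1 = 1 + s • g1) (h2 : g2 * g2 = 1 + s • g2) :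
    g1 * g2 * g1 * eulerianNumerator s g1 g2 = eulerianNumerator s g1 g2 := by
  simp only [eulerianNumerator, mul_add, mul_sub, mul_one, mul_smul_comm, omega_mul_g1 h1,
    omega_mul_g2 braid h2, omega_mul_g1_mul_g2 braid h1 h2, omega_mul_g2_mul_g1 braid h1 h2,
    omega_mul_omega braid h1 h2]
  match_scalars <;> ring

theorem smul_eulerianNumerator {K : Type*} [Field K] [Algebra K A] (h2K : (2 : K) ≠ 0)
    (b s : K) :
    b⁻¹ • ((1 : A) - (2 : K)⁻¹ • (g1 * g2 + g1 + g2 + g2 * g1) + g1 * g2 * g1)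
      + (s / (2 * b)) • (g1 - g2 * g1 - g1 * g2 + g2) = (2 * b)⁻¹ • eulerianNumerator s g1 g2 := by
  simp only [eulerianNumerator]
  match_scalars <;> field_simp <;> ring

end Hecke

/-- In the Hecke algebra `H₃(q)`, the deformed Eulerian idempotent `e(q)` satisfies
`ω e(q) = e(q)` where `ω = g₁g₂g₁` is the maximal element. -/
theorem hecke_eulerian_omega_fixed
    {A : Type*} [Ring A] [Algebra (RatFunc ℂ) A]
    (g1 g2 : A)
    (braid : g1 * g2 * g1 = g2 * g1 * g2)
    (hecke1 : g1 * g1 = 1 + algebraMap (RatFunc ℂ) A (RatFunc.X - RatFunc.X⁻¹) * g1)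
    (hecke2 : g2 * g2 = 1 + algebraMap (RatFunc ℂ) A (RatFunc.X - RatFunc.X⁻¹) * g2) :
    let q : RatFunc ℂ := RatFunc.X
    let qn : RatFunc ℂ := q ^ 2 + 1 + q⁻¹ ^ 2
    let e : A :=
      qn⁻¹ • ((1 : A) - (2 : RatFunc ℂ)⁻¹ • (g1 * g2 + g1 + g2 + g2 * g1) + g1 * g2 * g1)
        + ((q - q⁻¹) / (2 * qn)) • (g1 - g2 * g1 - g1 * g2 + g2)
    (g1 * g2 * g1) * e = e := by
  intro q qn e
  rw [← Algebra.smul_def] at hecke1 hecke2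
  have he : e = (2 * qn)⁻¹ • Hecke.eulerianNumerator (q - q⁻¹) g1 g2 :=
    Hecke.smul_eulerianNumerator two_ne_zero qn (q - q⁻¹)
  rw [he, mul_smul_comm, Hecke.omega_mul_eulerianNumerator braid hecke1 hecke2]
end

section
/- For q ≠ ±1, the idempotent e(q) of the paper is the unique idempotent of H₃(q) of the form e(q) = (1/[3])(T_{123} - (1/2)(T_{231}+T_{213}+T_{132}+T_{312}) + T_{321}) + c(T_{213} - T_{312} - T_{231} + T_{132}) satisfying ω e = e; the equation ω e(q) = e(q) forces c = (q - q⁻¹)/(2[3]). -/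
/-!
Put `δ = q - q⁻¹`, `ω = g₁g₂g₁` and write the candidate as `e = aE + cF` with `a = [3]⁻¹`,
`E = 1 - ½(g₁g₂ + g₁ + g₂ + g₂g₁) + ω` and `F = g₁ - g₂g₁ - g₁g₂ + g₂`. Multiplying out with
the braid and quadratic relations gives `ωE - E = δv` and `ωF - F = -2v` for one and the same
element `v = g₁ + g₂ + (δ - 1)(g₁g₂ + g₂g₁) + (δ² - δ)ω`. Hence `ωe - e = (aδ - 2c)v`, and
`v ≠ 0` because its `g₁`-coordinate in the standard basis is `1`; so `ωe = e` exactly when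
`c = aδ/2`.
-/

section HeckeRelations

variable {K A : Type*} [Field K] [Ring A] [Algebra K A]

def heckeDefect (δ : K) (g1 g2 : A) : A :=
  g1 + g2 + (δ - 1) • (g1 * g2 + g2 * g1) + (δ * δ - δ) • (g1 * g2 * g1)

theorem hecke_w_mul_g1 {g1 g2 : A} {δ : K} (hg1 : g1 * g1 = 1 + δ • g1) :
    g1 * g2 * g1 * g1 = g1 * g2 + δ • (g1 * g2 * g1) := by
  rw [mul_assoc (g1 * g2), hg1, mul_add, mul_one, mul_smul_comm]

theorem hecke_w_mul_g2 {g1 g2 : A} {δ : K} (braid : g1 * g2 * g1 = g2 * g1 * g2)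
    (hg2 : g2 * g2 = 1 + δ • g2) :
    g1 * g2 * g1 * g2 = g2 * g1 + δ • (g1 * g2 * g1) := by
  rw [braid, mul_assoc (g2 * g1), hg2, mul_add, mul_one, mul_smul_comm]

theorem hecke_w_mul_g1_mul_g2 {g1 g2 : A} {δ : K} (braid : g1 * g2 * g1 = g2 * g1 * g2)
    (hg1 : g1 * g1 = 1 + δ • g1) (hg2 : g2 * g2 = 1 + δ • g2) :
    g1 * g2 * g1 * (g1 * g2)
      = g1 + δ • (g1 * g2) + δ • (g2 * g1) + (δ * δ) • (g1 * g2 * g1) := by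
  rw [← mul_assoc, hecke_w_mul_g1 hg1, add_mul, smul_mul_assoc, hecke_w_mul_g2 braid hg2,
    mul_assoc, hg2, mul_add, mul_one, mul_smul_comm]
  module

theorem hecke_w_mul_g2_mul_g1 {g1 g2 : A} {δ : K} (braid : g1 * g2 * g1 = g2 * g1 * g2)
    (hg1 : g1 * g1 = 1 + δ • g1) (hg2 : g2 * g2 = 1 + δ • g2) :
    g1 * g2 * g1 * (g2 * g1)
      = g2 + δ • (g1 * g2) + δ • (g2 * g1) + (δ * δ) • (g1 * g2 * g1) := by
  rw [← mul_assoc, hecke_w_mul_g2 braid hg2, add_mul, smul_mul_assoc, hecke_w_mul_g1 hg1,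
    mul_assoc g2, hg1, mul_add, mul_one, mul_smul_comm]
  module

theorem hecke_w_mul_w {g1 g2 : A} {δ : K} (braid : g1 * g2 * g1 = g2 * g1 * g2)
    (hg1 : g1 * g1 = 1 + δ • g1) (hg2 : g2 * g2 = 1 + δ • g2) :
    g1 * g2 * g1 * (g1 * g2 * g1)
      = 1 + δ • g1 + δ • g2 + (δ * δ) • (g1 * g2) + (δ * δ) • (g2 * g1)
        + (δ + δ * δ * δ) • (g1 * g2 * g1) := by
  rw [← mul_assoc, hecke_w_mul_g1_mul_g2 braid hg1 hg2, add_mul, add_mul, add_mul,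
    smul_mul_assoc, smul_mul_assoc, smul_mul_assoc, hg1, hecke_w_mul_g1 hg1, mul_assoc g2, hg1,
    mul_add, mul_one, mul_smul_comm]
  module

theorem hecke_w_mul_sub_self_eulerian {g1 g2 : A} {δ : K} (h2 : (2 : K) ≠ 0)
    (braid : g1 * g2 * g1 = g2 * g1 * g2)
    (hg1 : g1 * g1 = 1 + δ • g1) (hg2 : g2 * g2 = 1 + δ • g2) :
    let E : A := 1 - (2 : K)⁻¹ • (g1 * g2 + g1 + g2 + g2 * g1) + g1 * g2 * g1
    g1 * g2 * g1 * E - E = δ • heckeDefect δ g1 g2 := by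
  simp only [heckeDefect, mul_add, mul_sub, mul_smul_comm, mul_one, hecke_w_mul_g1 hg1,
    hecke_w_mul_g2 braid hg2, hecke_w_mul_g1_mul_g2 braid hg1 hg2,
    hecke_w_mul_g2_mul_g1 braid hg1 hg2, hecke_w_mul_w braid hg1 hg2]
  match_scalars <;> field_simp <;> ring

theorem hecke_w_mul_sub_self_sign {g1 g2 : A} {δ : K} (braid : g1 * g2 * g1 = g2 * g1 * g2)
    (hg1 : g1 * g1 = 1 + δ • g1) (hg2 : g2 * g2 = 1 + δ • g2) :
    let F : A := g1 - g2 * g1 - g1 * g2 + g2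
    g1 * g2 * g1 * F - F = (-2 : K) • heckeDefect δ g1 g2 := by
  simp only [heckeDefect, mul_add, mul_sub, hecke_w_mul_g1 hg1, hecke_w_mul_g2 braid hg2,
    hecke_w_mul_g1_mul_g2 braid hg1 hg2, hecke_w_mul_g2_mul_g1 braid hg1 hg2]
  module

theorem hecke_w_mul_sub_self {g1 g2 : A} {δ : K} (h2 : (2 : K) ≠ 0)
    (braid : g1 * g2 * g1 = g2 * g1 * g2)
    (hg1 : g1 * g1 = 1 + δ • g1) (hg2 : g2 * g2 = 1 + δ • g2) (a c : K) :
    let e : A := a • (1 - (2 : K)⁻¹ • (g1 * g2 + g1 + g2 + g2 * g1) + g1 * g2 * g1)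
      + c • (g1 - g2 * g1 - g1 * g2 + g2)
    g1 * g2 * g1 * e - e = (a * δ - 2 * c) • heckeDefect δ g1 g2 := by
  intro e
  rw [mul_add, mul_smul_comm, mul_smul_comm, add_sub_add_comm, ← smul_sub, ← smul_sub,
    hecke_w_mul_sub_self_eulerian h2 braid hg1 hg2, hecke_w_mul_sub_self_sign braid hg1 hg2,
    smul_smul, smul_smul, ← add_smul]
  congr 1
  ring

theorem heckeDefect_ne_zero {g1 g2 : A} (δ : K)
    (basis : LinearIndependent K ![(1 : A), g1, g2, g1 * g2, g2 * g1, g1 * g2 * g1]) :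
    heckeDefect δ g1 g2 ≠ 0 := by
  intro h
  have hsum : ∑ i, ![0, 1, 1, δ - 1, δ - 1, δ * δ - δ] i
      • ![(1 : A), g1, g2, g1 * g2, g2 * g1, g1 * g2 * g1] i = 0 := by
    rw [← h, heckeDefect, Fin.sum_univ_six]
    simp only [Matrix.cons_val, zero_smul, one_smul, zero_add, smul_add]
    abel
  simpa using Fintype.linearIndependent_iff.mp basis _ hsum 1

end HeckeRelations

/-- Uniqueness of the deformed Eulerian idempotent: in the Hecke algebra `H₃(q)`
(with the six standard basis elements `T_w` linearly independent over `ℂ(q)`),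
an element of the form
`e_c = (1/[3])(T₁₂₃ - ½(T₂₃₁+T₂₁₃+T₁₃₂+T₃₁₂) + T₃₂₁) + c (T₂₁₃ - T₃₁₂ - T₂₃₁ + T₁₃₂)`
satisfies `ω e_c = e_c` if and only if `c = (q - q⁻¹)/(2[3])`. -/
theorem hecke_eulerian_idempotent_unique
    {A : Type*} [Ring A] [Algebra (RatFunc ℂ) A]
    (g1 g2 : A)
    (braid : g1 * g2 * g1 = g2 * g1 * g2)
    (hecke1 : g1 * g1 = 1 + algebraMap (RatFunc ℂ) A (RatFunc.X - RatFunc.X⁻¹) * g1)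
    (hecke2 : g2 * g2 = 1 + algebraMap (RatFunc ℂ) A (RatFunc.X - RatFunc.X⁻¹) * g2)
    (basis : LinearIndependent (RatFunc ℂ)
      ![(1 : A), g1, g2, g1 * g2, g2 * g1, g1 * g2 * g1]) :
    let q : RatFunc ℂ := RatFunc.X
    let qn : RatFunc ℂ := q ^ 2 + 1 + q⁻¹ ^ 2
    ∀ c : RatFunc ℂ,
      (g1 * g2 * g1) *
          (qn⁻¹ • ((1 : A) - (2 : RatFunc ℂ)⁻¹ • (g1 * g2 + g1 + g2 + g2 * g1)
              + g1 * g2 * g1)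
            + c • (g1 - g2 * g1 - g1 * g2 + g2))
        = qn⁻¹ • ((1 : A) - (2 : RatFunc ℂ)⁻¹ • (g1 * g2 + g1 + g2 + g2 * g1)
              + g1 * g2 * g1)
            + c • (g1 - g2 * g1 - g1 * g2 + g2)
      ↔ c = (q - q⁻¹) / (2 * qn) := by
  intro q qn c
  rw [← Algebra.smul_def] at hecke1 hecke2
  rw [← sub_eq_zero, hecke_w_mul_sub_self two_ne_zero braid hecke1 hecke2, smul_eq_zero,
    or_iff_left (heckeDefect_ne_zero _ basis), div_eq_mul_inv, mul_inv]
  constructor <;> intro h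
  · linear_combination (-(2 : RatFunc ℂ)⁻¹) * h
  · linear_combination (-2 : RatFunc ℂ) * h
end

section
/- In the Hecke algebra H₃(q), the elements Γ¹³₂ = 1 + q g₁ - (1 + q⁻¹)g₂ - (1+q)g₂g₁ + q⁻¹ g₁g₂ + g₂g₁g₂ and Γ¹²₃ = 1 + q g₂ - (1 + q⁻¹)g₁ - (1+q)g₁g₂ + q⁻¹ g₂g₁ + g₁g₂g₁ satisfy: Γ¹²₃ g₁ = -q⁻¹ Γ¹²₃ - Γ¹³₂, Γ¹³₂ g₁ = q Γ¹³₂, Γ¹²₃ g₂ = q Γ¹²₃, and Γ¹³₂ g₂ = -q⁻¹ Γ¹³₂ - Γ¹²₃. -/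
/-!
The Hecke relation says `(g - q)(g + q⁻¹) = 0`, with commuting factors. By the braid relation,
`Γ¹²₃ = (q - (1 + q) g₁ + g₂ g₁)(g₂ + q⁻¹)`, so `Γ¹²₃ (g₂ - q) = 0`. Writing
`X = q - (1 + q) g₂ + g₁ g₂` for the left factor of `Γ¹³₂ = X (g₁ + q⁻¹)`, the sum `Γ¹²₃ + X`
is a left multiple of `g₁ - q`, so `Γ¹²₃ (g₁ + q⁻¹) + Γ¹³₂ = (Γ¹²₃ + X)(g₁ + q⁻¹) = 0`.
The remaining two identities follow by exchanging `g₁` and `g₂`, which exchanges `Γ¹²₃` and `Γ¹³₂`.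
-/

section HeckeGamma

variable {K : Type*} [Field K] {A : Type*} [Ring A] [Algebra K A] {q : K}

/-- `heckeGamma q g₁ g₂ = Γ¹²₃` and `heckeGamma q g₂ g₁ = Γ¹³₂`. -/
def heckeGamma (q : K) (a b : A) : A :=
  1 + q • b - (1 + q⁻¹) • a - (1 + q) • (a * b) + q⁻¹ • (b * a) + a * b * a

theorem hecke_sub_mul_add_eq_zero (hq : q ≠ 0) {a : A}
    (ha : a * a = 1 + algebraMap K A (q - q⁻¹) * a) :
    (a - algebraMap K A q) * (a + algebraMap K A q⁻¹) = 0 := by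
  simp only [Algebra.algebraMap_eq_smul_one, smul_mul_assoc, one_mul] at ha ⊢
  simp only [mul_add, sub_mul, mul_smul_comm, smul_mul_assoc, one_mul, mul_one, ha]
  match_scalars <;> field_simp <;> ring

theorem hecke_add_mul_sub_eq_zero (hq : q ≠ 0) {a : A}
    (ha : a * a = 1 + algebraMap K A (q - q⁻¹) * a) :
    (a + algebraMap K A q⁻¹) * (a - algebraMap K A q) = 0 := by
  have hcomm : Commute (a - algebraMap K A q) (a + algebraMap K A q⁻¹) :=
    ((Commute.refl a).sub_left (Algebra.commute_algebraMap_left q a)).add_right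
      ((Algebra.commute_algebraMap_right q⁻¹ a).sub_left (Algebra.commute_algebraMap_left q _))
  rw [← hcomm.eq]
  exact hecke_sub_mul_add_eq_zero hq ha

theorem heckeGamma_eq_mul (hq : q ≠ 0) {a b : A} (hab : a * b * a = b * a * b) :
    heckeGamma q a b =
      (algebraMap K A q - (1 + q) • a + b * a) * (b + algebraMap K A q⁻¹) := by
  simp only [heckeGamma, Algebra.algebraMap_eq_smul_one, mul_add, add_mul, sub_mul,
    smul_mul_assoc, mul_smul_comm, one_mul, mul_one, hab]
  match_scalars <;> field_simp; ring

theorem heckeGamma_add_eq_mul (hq : q ≠ 0) (a b : A) :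
    heckeGamma q a b + (algebraMap K A q - (1 + q) • b + a * b) =
      (a * b + q⁻¹ • b - algebraMap K A (1 + q⁻¹)) * (a - algebraMap K A q) := by
  simp only [heckeGamma, Algebra.algebraMap_eq_smul_one, mul_sub, add_mul, sub_mul,
    smul_mul_assoc, mul_smul_comm, one_mul, mul_one]
  match_scalars <;> field_simp <;> ring

theorem heckeGamma_mul_right (hq : q ≠ 0) {a b : A} (hab : a * b * a = b * a * b)
    (hb : b * b = 1 + algebraMap K A (q - q⁻¹) * b) :
    heckeGamma q a b * b = q • heckeGamma q a b := by
  have h : heckeGamma q a b * (b - algebraMap K A q) = 0 := by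
    rw [heckeGamma_eq_mul hq hab, mul_assoc, hecke_add_mul_sub_eq_zero hq hb, mul_zero]
  rwa [mul_sub, sub_eq_zero, ← Algebra.commutes, ← Algebra.smul_def] at h

theorem heckeGamma_mul_left (hq : q ≠ 0) {a b : A} (hab : a * b * a = b * a * b)
    (ha : a * a = 1 + algebraMap K A (q - q⁻¹) * a) :
    heckeGamma q a b * a = -(q⁻¹ • heckeGamma q a b) - heckeGamma q b a := by
  have h : heckeGamma q a b * (a + algebraMap K A q⁻¹) + heckeGamma q b a = 0 := by
    rw [heckeGamma_eq_mul hq hab.symm, ← add_mul, heckeGamma_add_eq_mul hq, mul_assoc,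
      hecke_sub_mul_add_eq_zero hq ha, mul_zero]
  rw [mul_add, ← Algebra.commutes, ← Algebra.smul_def] at h
  rw [← sub_eq_zero, ← h]
  abel

end HeckeGamma

/-- Action of the Hecke generators on the spanning elements `Γ¹³₂`, `Γ¹²₃` of the
parastatistics Hecke ideal, in any `K`-algebra with invertible `q` where `g₁, g₂`
satisfy the braid and Hecke relations. -/
theorem hecke_gamma_action
    {K : Type*} [Field K] (q : K) (hq : q ≠ 0)
    {A : Type*} [Ring A] [Algebra K A]
    (g1 g2 : A)
    (braid : g1 * g2 * g1 = g2 * g1 * g2)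
    (hecke1 : g1 * g1 = 1 + algebraMap K A (q - q⁻¹) * g1)
    (hecke2 : g2 * g2 = 1 + algebraMap K A (q - q⁻¹) * g2) :
    let Γ132 : A := 1 + q • g1 - (1 + q⁻¹) • g2 - (1 + q) • (g2 * g1)
      + q⁻¹ • (g1 * g2) + g2 * g1 * g2
    let Γ123 : A := 1 + q • g2 - (1 + q⁻¹) • g1 - (1 + q) • (g1 * g2)
      + q⁻¹ • (g2 * g1) + g1 * g2 * g1
    Γ123 * g1 = -(q⁻¹ • Γ123) - Γ132 ∧
    Γ132 * g1 = q • Γ132 ∧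
    Γ123 * g2 = q • Γ123 ∧
    Γ132 * g2 = -(q⁻¹ • Γ132) - Γ123 :=
  ⟨heckeGamma_mul_left hq braid hecke1, heckeGamma_mul_right hq braid.symm hecke1,
    heckeGamma_mul_right hq braid hecke2, heckeGamma_mul_left hq braid.symm hecke2⟩
end
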